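/- arXiv:1401.2082 — 5 statements merged into one kernel-verified Lean document; each statement's English description precedes it below -/
import Mathlib

section
/- Every monic matrix pseudodifferential operator A(∂) of order N ≥ 1 over a differential algebra has a unique monic N-th root: there exists exactly one monic matrix pseudodifferential operator A^{1/N}(∂) of order 1 such that (A^{1/N}(∂))^N = A(∂). -/
/-!
STATEMENT 6: Every monic `m×m` matrix pseudodifferential operator `a(∂)` of order
`N ≥ 1` over a differential algebra (over a field of characteristic 0) has a
unique monic `N`-th root of order `1`: there is exactly one monic matrix
pseudodifferential operator `b(∂)` of order `1` with `b(∂)^N = a(∂)`.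

Matrix pseudodifferential operators are encoded by coefficient functions
`ℤ → Matrix (Fin m) (Fin m) A` with support bounded above; the product is given
coefficientwise via `∂^q ∘ M = ∑_k C(q,k) M^{(k)} ∂^{q-k}`.
-/

noncomputable def matPdoMul {A : Type*} [CommRing A] {m : ℕ} (d : A → A)
    (a b : ℤ → Matrix (Fin m) (Fin m) A) (p : ℤ) : Matrix (Fin m) (Fin m) A :=
  ∑ᶠ q : ℤ, ∑ᶠ k : ℕ, Ring.choose q k • (a q * (b (p - q + k)).map (d^[k]))

noncomputable def matPdoOne {A : Type*} [CommRing A] {m : ℕ} :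
    ℤ → Matrix (Fin m) (Fin m) A :=
  fun p => if p = 0 then 1 else 0

noncomputable def matPdoPow {A : Type*} [CommRing A] {m : ℕ} (d : A → A)
    (b : ℤ → Matrix (Fin m) (Fin m) A) : ℕ → ℤ → Matrix (Fin m) (Fin m) A
  | 0 => matPdoOne
  | (k + 1) => fun p => matPdoMul d b (matPdoPow d b k) p

section Aux

variable {A : Type*} [CommRing A] {m : ℕ}

private lemma map_iter_zero (d : A → A) (hd : d 0 = 0) (k : ℕ) :
    (0 : Matrix (Fin m) (Fin m) A).map (d^[k]) = 0 := by
  have h : d^[k] 0 = 0 := by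
    induction k with
    | zero => simp
    | succ k ih => rw [Function.iterate_succ_apply', ih, hd]
  ext i j
  simp [Matrix.map_apply, h]

private lemma matPdoMul_eq_sum (d : A → A) (hd : d 0 = 0) (M : ℤ)
    (b c : ℤ → Matrix (Fin m) (Fin m) A)
    (hb : ∀ n : ℤ, 1 < n → b n = 0) (hc : ∀ n : ℤ, M < n → c n = 0) (p : ℤ) :
    matPdoMul d b c p = ∑ q ∈ Finset.Icc (p - M) 1, ∑ k ∈ Finset.range (M - p + 2).toNat,
      Ring.choose q k • (b q * (c (p - q + k)).map (d^[k])) := by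
  unfold matPdoMul
  have hinner : ∀ q : ℤ, (∑ᶠ k : ℕ, Ring.choose q k • (b q * (c (p - q + k)).map (d^[k])))
      = ∑ k ∈ Finset.range (M - p + 2).toNat,
          Ring.choose q k • (b q * (c (p - q + k)).map (d^[k])) := by
    intro q
    by_cases hq : 1 < q
    · simp [hb q hq]
    · apply finsum_eq_finset_sum_of_support_subset
      intro k hk
      simp only [Function.mem_support] at hk
      simp only [Finset.coe_range, Set.mem_Iio]
      by_contra hk2
      push_neg at hk2
      have hcast : ((M - p + 2).toNat : ℤ) ≤ (k : ℤ) := by exact_mod_cast hk2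
      have hself : M - p + 2 ≤ ((M - p + 2).toNat : ℤ) := Int.self_le_toNat _
      have hMc : M < p - q + k := by omega
      exact hk (by rw [hc _ hMc, map_iter_zero d hd, mul_zero, smul_zero])
  rw [finsum_congr hinner]
  apply finsum_eq_finset_sum_of_support_subset
  intro q hq
  simp only [Function.mem_support] at hq
  simp only [Finset.coe_Icc, Set.mem_Icc]
  constructor
  · by_contra h
    push_neg at h
    apply hq
    apply Finset.sum_eq_zero
    intro k _
    have hMc : M < p - q + k := by omega
    rw [hc _ hMc, map_iter_zero d hd, mul_zero, smul_zero]
  · by_contra h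
    push_neg at h
    apply hq
    apply Finset.sum_eq_zero
    intro k _
    rw [hb q h, zero_mul, smul_zero]

private lemma matPdoPow_bd (d : A → A) (hd : d 0 = 0)
    (b : ℤ → Matrix (Fin m) (Fin m) A) (hb : ∀ n : ℤ, 1 < n → b n = 0) :
    ∀ (n : ℕ) (p : ℤ), (n : ℤ) < p → matPdoPow d b n p = 0 := by
  intro n
  induction n with
  | zero =>
    intro p hp
    have : p ≠ 0 := by omega
    simp [matPdoPow, matPdoOne, this]
  | succ n ih =>
    intro p hp
    show matPdoMul d b (matPdoPow d b n) p = 0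
    rw [matPdoMul_eq_sum d hd n b _ hb (fun r hr => ih r hr) p,
      Finset.Icc_eq_empty (by push_cast at hp ⊢; omega), Finset.sum_empty]

private lemma matPdoPow_monic (d : A → A) (hd : d 0 = 0)
    (b : ℤ → Matrix (Fin m) (Fin m) A) (hb : ∀ n : ℤ, 1 < n → b n = 0) (hb1 : b 1 = 1) :
    ∀ n : ℕ, matPdoPow d b n (n : ℤ) = 1 := by
  intro n
  induction n with
  | zero => simp [matPdoPow, matPdoOne]
  | succ n ih =>
    show matPdoMul d b (matPdoPow d b n) ((n + 1 : ℕ) : ℤ) = 1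
    rw [matPdoMul_eq_sum d hd n b _ hb (fun r hr => matPdoPow_bd d hd b hb n r hr) _]
    have e1 : Finset.Icc (((n + 1 : ℕ) : ℤ) - (n : ℤ)) 1 = {1} := by
      have : ((n + 1 : ℕ) : ℤ) - (n : ℤ) = 1 := by push_cast; ring
      rw [this, Finset.Icc_self]
    have e2 : ((n : ℤ) - ((n + 1 : ℕ) : ℤ) + 2).toNat = 1 := by
      have : ((n + 1 : ℕ) : ℤ) = (n : ℤ) + 1 := by push_cast; ring
      omega
    rw [e1, e2, Finset.sum_singleton, Finset.range_one, Finset.sum_singleton]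
    have e3 : ((n + 1 : ℕ) : ℤ) - 1 + ((0 : ℕ) : ℤ) = (n : ℤ) := by push_cast; ring
    rw [e3, ih, Ring.choose_zero_right, hb1, Function.iterate_zero, Matrix.map_id, mul_one,
      one_smul]

private lemma matPdoPow_key (d : A → A) (hd : d 0 = 0) :
    ∀ (n : ℕ) (b b' : ℤ → Matrix (Fin m) (Fin m) A),
      (∀ j : ℤ, 1 < j → b j = 0) → (∀ j : ℤ, 1 < j → b' j = 0) →
      b 1 = 1 → b' 1 = 1 →
      ∀ p : ℤ, (∀ j : ℤ, p - n + 1 < j → b j = b' j) →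
      matPdoPow d b n p - matPdoPow d b' n p = n • (b (p - n + 1) - b' (p - n + 1)) := by
  intro n
  induction n with
  | zero =>
    intro b b' _ _ _ _ p _
    simp [matPdoPow]
  | succ n ih =>
    intro b b' hb hb' hb1 hb'1 p hag
    have hcast : ((n + 1 : ℕ) : ℤ) = (n : ℤ) + 1 := by push_cast; ring
    rcases lt_trichotomy p ((n : ℤ) + 1) with hp | hp | hp
    · -- main case : p ≤ n
      have hpn : p ≤ (n : ℤ) := by omega
      have hq0 : p - ((n + 1 : ℕ) : ℤ) + 1 = p - n := by omega
      rw [hq0]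
      rw [hq0] at hag
      have hag' : ∀ j : ℤ, p - (n : ℤ) < j → b j = b' j := hag
      set Δ := b (p - (n : ℤ)) - b' (p - (n : ℤ)) with hΔ
      show matPdoMul d b (matPdoPow d b n) p - matPdoMul d b' (matPdoPow d b' n) p
        = (n + 1) • Δ
      rw [matPdoMul_eq_sum d hd n b _ hb (fun r hr => matPdoPow_bd d hd b hb n r hr) p,
        matPdoMul_eq_sum d hd n b' _ hb' (fun r hr => matPdoPow_bd d hd b' hb' n r hr) p,
        ← Finset.sum_sub_distrib]
      have h0mem : 0 ∈ Finset.range ((n : ℤ) - p + 2).toNat := by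
        simp only [Finset.mem_range]
        omega
      have hmain : ∀ q ∈ Finset.Icc (p - (n : ℤ)) 1,
          ((∑ k ∈ Finset.range ((n : ℤ) - p + 2).toNat,
              Ring.choose q k • (b q * ((matPdoPow d b n) (p - q + k)).map (d^[k])))
           - ∑ k ∈ Finset.range ((n : ℤ) - p + 2).toNat,
              Ring.choose q k • (b' q * ((matPdoPow d b' n) (p - q + k)).map (d^[k])))
          = if q = 1 then n • Δ else if q = p - (n : ℤ) then Δ else 0 := by
        intro q hq
        obtain ⟨hql, hqr⟩ := Finset.mem_Icc.mp hq
        rw [← Finset.sum_sub_distrib]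
        by_cases hq1 : q = 1
        · subst hq1
          rw [if_pos rfl]
          rw [Finset.sum_eq_single_of_mem 0 h0mem]
          · have e0 : p - 1 + ((0 : ℕ) : ℤ) = p - 1 := by push_cast; ring
            rw [e0, Ring.choose_zero_right, Function.iterate_zero, Matrix.map_id,
              Matrix.map_id, hb1, hb'1, one_mul, one_mul, one_smul, one_smul]
            have hihp := ih b b' hb hb' hb1 hb'1 (p - 1) (fun j hj => hag' j (by omega))
            have e1 : p - 1 - (n : ℤ) + 1 = p - (n : ℤ) := by ring
            rw [e1] at hihp
            exact hihp
          · intro k _ hk0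
            by_cases hr : (n : ℤ) < p - 1 + k
            · rw [matPdoPow_bd d hd b hb n _ hr, matPdoPow_bd d hd b' hb' n _ hr]
              simp [map_iter_zero d hd]
            · have hihr := ih b b' hb hb' hb1 hb'1 (p - 1 + k) (fun j hj => hag' j (by omega))
              have hz : b (p - 1 + (k : ℤ) - n + 1) = b' (p - 1 + (k : ℤ) - n + 1) :=
                hag' _ (by omega)
              rw [hz, sub_self, smul_zero] at hihr
              rw [hb1, hb'1, sub_eq_zero.mp hihr, sub_self]
        · rw [if_neg hq1]
          by_cases hq2 : q = p - (n : ℤ)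
          · subst hq2
            rw [if_pos rfl]
            rw [Finset.sum_eq_single_of_mem 0 h0mem]
            · have e0 : p - (p - (n : ℤ)) + ((0 : ℕ) : ℤ) = (n : ℤ) := by push_cast; ring
              rw [e0, Ring.choose_zero_right, Function.iterate_zero, Matrix.map_id,
                Matrix.map_id, matPdoPow_monic d hd b hb hb1 n,
                matPdoPow_monic d hd b' hb' hb'1 n, mul_one, mul_one, one_smul, one_smul]
            · intro k _ hk0
              have hr : (n : ℤ) < p - (p - (n : ℤ)) + k := by omega
              rw [matPdoPow_bd d hd b hb n _ hr, matPdoPow_bd d hd b' hb' n _ hr]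
              simp [map_iter_zero d hd]
          · rw [if_neg hq2]
            apply Finset.sum_eq_zero
            intro k _
            have hqlt : p - (n : ℤ) < q := lt_of_le_of_ne hql (Ne.symm hq2)
            have hql1 : q < 1 := lt_of_le_of_ne hqr hq1
            have hbq : b q = b' q := hag' q hqlt
            by_cases hr : (n : ℤ) < p - q + k
            · rw [matPdoPow_bd d hd b hb n _ hr, matPdoPow_bd d hd b' hb' n _ hr]
              simp [map_iter_zero d hd]
            · have hihr := ih b b' hb hb' hb1 hb'1 (p - q + k) (fun j hj => hag' j (by omega))
              have hz : b (p - q + (k : ℤ) - n + 1) = b' (p - q + (k : ℤ) - n + 1) :=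
                hag' _ (by omega)
              rw [hz, sub_self, smul_zero] at hihr
              rw [hbq, sub_eq_zero.mp hihr, sub_self]
      rw [Finset.sum_congr rfl hmain]
      have hne : (p - (n : ℤ)) ≠ 1 := by omega
      have hsplit : ∀ q ∈ Finset.Icc (p - (n : ℤ)) 1,
          (if q = 1 then n • Δ else if q = p - (n : ℤ) then Δ else 0)
          = (if q = 1 then n • Δ else 0) + (if q = p - (n : ℤ) then Δ else 0) := by
        intro q _
        by_cases h1 : q = 1
        · subst h1
          rw [if_pos rfl, if_pos rfl, if_neg (Ne.symm hne), add_zero]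
        · rw [if_neg h1, if_neg h1, zero_add]
      rw [Finset.sum_congr rfl hsplit, Finset.sum_add_distrib,
        Finset.sum_ite_eq' _ (1 : ℤ) (fun _ => n • Δ),
        Finset.sum_ite_eq' _ (p - (n : ℤ)) (fun _ => Δ),
        if_pos (Finset.mem_Icc.mpr ⟨by omega, le_refl 1⟩),
        if_pos (Finset.mem_Icc.mpr ⟨le_refl _, by omega⟩), succ_nsmul]
    · -- p = n + 1
      have hm := matPdoPow_monic d hd b hb hb1 (n + 1)
      have hm' := matPdoPow_monic d hd b' hb' hb'1 (n + 1)
      have hp' : p = ((n + 1 : ℕ) : ℤ) := by omega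
      subst hp'
      rw [hm, hm', sub_self]
      have e : ((n + 1 : ℕ) : ℤ) - ((n + 1 : ℕ) : ℤ) + 1 = 1 := by ring
      rw [e, hb1, hb'1, sub_self, smul_zero]
    · -- p > n + 1
      have hp' : ((n + 1 : ℕ) : ℤ) < p := by omega
      rw [matPdoPow_bd d hd b hb (n + 1) p hp', matPdoPow_bd d hd b' hb' (n + 1) p hp',
        sub_self]
      have h1 : 1 < p - ((n + 1 : ℕ) : ℤ) + 1 := by omega
      rw [hb _ h1, hb' _ h1, sub_self, smul_zero]

end Aux

noncomputable def pdoRootAux (F : Type*) [Field F] {A : Type*} [CommRing A] [Algebra F A]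
    {m : ℕ} (d : A → A) (N : ℕ) (a : ℤ → Matrix (Fin m) (Fin m) A) :
    ℕ → ℤ → Matrix (Fin m) (Fin m) A
  | 0 => fun j => if j = 1 then 1 else 0
  | (t + 1) => fun j =>
      if j = -(t : ℤ) then
        (N : F)⁻¹ • (a ((N : ℤ) - ((t : ℤ) + 1))
          - matPdoPow d (pdoRootAux F d N a t) N ((N : ℤ) - ((t : ℤ) + 1)))
      else pdoRootAux F d N a t j

section RootAux

variable (F : Type*) [Field F] {A : Type*} [CommRing A] [Algebra F A] {m : ℕ}
  (d : A → A) (N : ℕ) (a : ℤ → Matrix (Fin m) (Fin m) A)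

private lemma pdoRootAux_bd : ∀ (t : ℕ) (j : ℤ), 1 < j → pdoRootAux F d N a t j = 0 := by
  intro t
  induction t with
  | zero =>
    intro j hj
    show (if j = 1 then (1 : Matrix (Fin m) (Fin m) A) else 0) = 0
    rw [if_neg (by omega)]
  | succ t ih =>
    intro j hj
    show (if j = -(t : ℤ) then _ else pdoRootAux F d N a t j) = 0
    rw [if_neg (by omega), ih j hj]

private lemma pdoRootAux_one : ∀ t : ℕ, pdoRootAux F d N a t 1 = 1 := by
  intro t
  induction t with
  | zero => simp [pdoRootAux]
  | succ t ih =>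
    show (if (1 : ℤ) = -(t : ℤ) then _ else pdoRootAux F d N a t 1) = 1
    rw [if_neg (by omega), ih]

private lemma pdoRootAux_low : ∀ (t : ℕ) (j : ℤ), j < 1 - (t : ℤ) →
    pdoRootAux F d N a t j = 0 := by
  intro t
  induction t with
  | zero =>
    intro j hj
    show (if j = 1 then (1 : Matrix (Fin m) (Fin m) A) else 0) = 0
    rw [if_neg (by omega)]
  | succ t ih =>
    intro j hj
    show (if j = -(t : ℤ) then _ else pdoRootAux F d N a t j) = 0
    rw [if_neg (by push_cast at hj ⊢; omega), ih j (by push_cast at hj ⊢; omega)]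

private lemma pdoRootAux_stable : ∀ (t s : ℕ), s ≤ t → ∀ j : ℤ, 1 - (s : ℤ) ≤ j →
    pdoRootAux F d N a t j = pdoRootAux F d N a s j := by
  intro t
  induction t with
  | zero =>
    intro s hs j _
    have : s = 0 := by omega
    subst this
    rfl
  | succ t ih =>
    intro s hs j hj
    by_cases hst : s = t + 1
    · subst hst; rfl
    · have hs' : s ≤ t := by omega
      have hne : j ≠ -(t : ℤ) := by push_cast at hj ⊢; omega
      calc pdoRootAux F d N a (t + 1) j
          = pdoRootAux F d N a t j := by
            show (if j = -(t : ℤ) then _ else pdoRootAux F d N a t j) = _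
            rw [if_neg hne]
        _ = pdoRootAux F d N a s j := ih s hs' j hj

end RootAux

theorem monic_matrix_pdo_root
    (F : Type*) [Field F] [CharZero F]
    (A : Type*) [CommRing A] [Algebra F A] (d : Derivation F A A)
    (m : ℕ) (N : ℕ) (hN : 1 ≤ N)
    (a : ℤ → Matrix (Fin m) (Fin m) A)
    (ha_bd : ∀ n : ℤ, (N : ℤ) < n → a n = 0) (ha_monic : a (N : ℤ) = 1) :
    ∃! b : ℤ → Matrix (Fin m) (Fin m) A,
      (∀ n : ℤ, 1 < n → b n = 0) ∧ b 1 = 1 ∧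
      (∀ p : ℤ, matPdoPow (⇑d) b N p = a p) := by
  have hd0 : (⇑d) (0 : A) = 0 := map_zero d
  have hNF : (N : F) ≠ 0 := Nat.cast_ne_zero.mpr (by omega)
  have hcancel : ∀ x : Matrix (Fin m) (Fin m) A, N • x = 0 → x = 0 := by
    intro x hx
    have h1 : ((N : F)) • x = 0 := by rw [Nat.cast_smul_eq_nsmul F N x]; exact hx
    calc x = (N : F)⁻¹ • ((N : F) • x) := (inv_smul_smul₀ hNF x).symm
      _ = 0 := by rw [h1, smul_zero]
  set c : ℕ → ℤ → Matrix (Fin m) (Fin m) A := pdoRootAux F (⇑d) N a with hc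
  have hc_bd := pdoRootAux_bd F (⇑d) N a
  have hc_one := pdoRootAux_one F (⇑d) N a
  have hc_low := pdoRootAux_low F (⇑d) N a
  have hc_stable := pdoRootAux_stable F (⇑d) N a
  -- correctness of the approximations
  have hcorrect : ∀ t : ℕ, ∀ s : ℕ, s ≤ t →
      matPdoPow (⇑d) (c t) N ((N : ℤ) - (s : ℤ)) = a ((N : ℤ) - (s : ℤ)) := by
    intro t
    induction t with
    | zero =>
      intro s hs
      have : s = 0 := by omega
      subst this
      simp only [Nat.cast_zero, sub_zero]
      rw [matPdoPow_monic (⇑d) hd0 (c 0) (hc_bd 0) (hc_one 0) N, ha_monic]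
    | succ t ih =>
      intro s hs
      by_cases hst : s = t + 1
      · subst hst
        have hkey := matPdoPow_key (⇑d) hd0 N (c (t + 1)) (c t)
          (hc_bd (t + 1)) (hc_bd t) (hc_one (t + 1)) (hc_one t)
          ((N : ℤ) - ((t : ℤ) + 1))
          (fun j hj => by
            show (if j = -(t : ℤ) then _ else c t j) = c t j
            rw [if_neg (by omega)])
        have e1 : (N : ℤ) - ((t : ℤ) + 1) - (N : ℤ) + 1 = -(t : ℤ) := by ring
        rw [e1] at hkey
        have hct : c t (-(t : ℤ)) = 0 := hc_low t _ (by omega)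
        have hct1 : c (t + 1) (-(t : ℤ))
            = (N : F)⁻¹ • (a ((N : ℤ) - ((t : ℤ) + 1))
                - matPdoPow (⇑d) (c t) N ((N : ℤ) - ((t : ℤ) + 1))) := by
          show (if -(t : ℤ) = -(t : ℤ) then _ else _) = _
          rw [if_pos rfl]
        rw [hct, hct1, sub_zero] at hkey
        have hsmul : N • ((N : F)⁻¹ • (a ((N : ℤ) - ((t : ℤ) + 1))
            - matPdoPow (⇑d) (c t) N ((N : ℤ) - ((t : ℤ) + 1))))
            = a ((N : ℤ) - ((t : ℤ) + 1))
              - matPdoPow (⇑d) (c t) N ((N : ℤ) - ((t : ℤ) + 1)) := by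
          rw [← Nat.cast_smul_eq_nsmul F N, smul_inv_smul₀ hNF]
        rw [hsmul] at hkey
        have e2 : (N : ℤ) - ((t + 1 : ℕ) : ℤ) = (N : ℤ) - ((t : ℤ) + 1) := by push_cast; ring
        rw [e2]
        have := sub_eq_iff_eq_add.mp hkey
        rw [this]
        abel
      · have hs' : s ≤ t := by omega
        have hkey := matPdoPow_key (⇑d) hd0 N (c (t + 1)) (c t)
          (hc_bd (t + 1)) (hc_bd t) (hc_one (t + 1)) (hc_one t)
          ((N : ℤ) - (s : ℤ))
          (fun j hj => by
            show (if j = -(t : ℤ) then _ else c t j) = c t j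
            rw [if_neg (by omega)])
        have e1 : (N : ℤ) - (s : ℤ) - (N : ℤ) + 1 = 1 - (s : ℤ) := by ring
        rw [e1] at hkey
        have hag : c (t + 1) (1 - (s : ℤ)) = c t (1 - (s : ℤ)) := by
          show (if (1 - (s : ℤ)) = -(t : ℤ) then _ else c t _) = c t _
          rw [if_neg (by omega)]
        rw [hag, sub_self, smul_zero] at hkey
        rw [sub_eq_zero.mp hkey, ih s hs']
  -- the root
  set b : ℤ → Matrix (Fin m) (Fin m) A := fun j => c ((1 - j).toNat) j with hbdef
  have hb_bd : ∀ n : ℤ, 1 < n → b n = 0 := by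
    intro n hn
    show c ((1 - n).toNat) n = 0
    exact hc_bd _ n hn
  have hb_one : b 1 = 1 := by
    show c ((1 - 1 : ℤ).toNat) 1 = 1
    exact hc_one _
  have hb_agree : ∀ (t : ℕ) (j : ℤ), 1 - (t : ℤ) ≤ j → b j = c t j := by
    intro t j hj
    show c ((1 - j).toNat) j = c t j
    have h1 : ((1 - j).toNat : ℤ) ≤ t ∨ (1 - j) ≤ ((1 - j).toNat : ℤ) := Or.inr (Int.self_le_toNat _)
    have hle : (1 - j).toNat ≤ t := by omega
    have hjge : 1 - ((1 - j).toNat : ℤ) ≤ j := by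
      have := Int.self_le_toNat (1 - j)
      omega
    exact (hc_stable t ((1 - j).toNat) hle j hjge).symm
  have hb_root : ∀ p : ℤ, matPdoPow (⇑d) b N p = a p := by
    intro p
    by_cases hp : (N : ℤ) < p
    · rw [matPdoPow_bd (⇑d) hd0 b hb_bd N p hp, ha_bd p hp]
    · push_neg at hp
      set s : ℕ := ((N : ℤ) - p).toNat with hs
      have hps : p = (N : ℤ) - (s : ℤ) := by
        have := Int.toNat_of_nonneg (by omega : (0 : ℤ) ≤ (N : ℤ) - p)
        omega
      have hkey := matPdoPow_key (⇑d) hd0 N b (c s) hb_bd (hc_bd s) hb_one (hc_one s) p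
        (fun j hj => hb_agree s j (by omega))
      have hag : b (p - (N : ℤ) + 1) = c s (p - (N : ℤ) + 1) := hb_agree s _ (by omega)
      rw [hag, sub_self, smul_zero] at hkey
      rw [sub_eq_zero.mp hkey, hps, hcorrect s s (le_refl s)]
  refine ⟨b, ⟨hb_bd, hb_one, hb_root⟩, ?_⟩
  rintro b' ⟨hb'_bd, hb'_one, hb'_root⟩
  have hagree : ∀ t : ℕ, ∀ j : ℤ, 1 - (t : ℤ) ≤ j → b' j = b j := by
    intro t
    induction t with
    | zero =>
      intro j hj
      rcases eq_or_lt_of_le (by omega : (1 : ℤ) ≤ j) with h1 | h1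
      · rw [← h1, hb'_one, hb_one]
      · rw [hb'_bd j h1, hb_bd j h1]
    | succ t ih =>
      intro j hj
      have hkey := matPdoPow_key (⇑d) hd0 N b' b hb'_bd hb_bd hb'_one hb_one
        ((N : ℤ) - ((t : ℤ) + 1))
        (fun j' hj' => ih j' (by omega))
      have e1 : (N : ℤ) - ((t : ℤ) + 1) - (N : ℤ) + 1 = -(t : ℤ) := by ring
      rw [e1, hb'_root, hb_root, sub_self] at hkey
      have hdiff : b' (-(t : ℤ)) = b (-(t : ℤ)) :=
        sub_eq_zero.mp (hcancel _ hkey.symm)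
      rcases eq_or_lt_of_le hj with h1 | h1
      · have : j = -(t : ℤ) := by push_cast at h1; omega
        rw [this, hdiff]
      · exact ih j (by push_cast at h1 ⊢; omega)
  funext j
  have ht : 1 - (((1 - j).toNat : ℕ) : ℤ) ≤ j := by
    have := Int.self_le_toNat (1 - j)
    omega
  exact hagree ((1 - j).toNat) j ht
end

section
/- For pseudodifferential operators A(∂), B(∂) over a differential algebra A, one has res_z A(z)B*(−z+λ) = res_z A(z+λ+∂)B(z), where B* is the formal adjoint, λ a formal variable, and ∂ acts on the coefficients of B. -/
/-!
STATEMENT 9: For pseudodifferential operators `a(∂), b(∂)` over a differential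
algebra `A`, one has `res_z a(z)b*(−z+λ) = res_z a(z+λ+∂)b(z)`, where `b*` is the
formal adjoint, `λ` a formal variable and `∂` acts on the coefficients of `b`.

Encoding: `a b : ℤ → A` are the coefficient functions (support bounded above).
The symbol of the adjoint `b*(∂) = ∑_n (−∂)ⁿ ∘ b n` has coefficients
`adjointCoeff d b q = ∑ᶠ j, ((−1)^{q+j} C(q+j,j)) • d^[j] (b (q+j))`.
Expanding `b*(−z+λ)` in non-negative powers of `λ` and `a(z+λ+∂)` in non-negative
powers of `λ` and `∂`, and taking `res_z`, the coefficient of `λ^i` of the two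
sides reads as in the statement below.
-/

/-- `(−1)^n` for `n : ℤ`. -/
def signPow (n : ℤ) : ℤ := (((-1 : ℤˣ) ^ n : ℤˣ) : ℤ)

/-- Coefficient of `∂^q` in the formal adjoint `∑_n (−∂)ⁿ ∘ b n`. -/
noncomputable def adjointCoeff {A : Type*} [CommRing A] (d : A → A)
    (b : ℤ → A) (q : ℤ) : A :=
  ∑ᶠ j : ℕ, (signPow (q + (j : ℤ)) * Ring.choose (q + (j : ℤ)) j) • d^[j] (b (q + j))

/-!
Both sides are finite double sums, over the order `q` of `b*` and the number `k` of
derivatives falling on `b`; the substitution `q = i - 1 - m` matches their terms. The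
coefficient `(-1)^(q-i) C(q,i) · (-1)^(q+k) C(q+k,k)` becomes `C(m,i) C(m-i,k)` by the
reflection `C(-r,n) = (-1)^n C(r+n-1,n)`, the signs cancelling, and
`C(m,i) C(m-i,k) = C(m,i+k) C(i+k,k)`.
-/

open Function

lemma signPow_eq_negOnePow (n : ℤ) : signPow n = n.negOnePow := rfl

theorem Ring.choose_natCast_sub_one_sub {R : Type*} [Ring R] [BinomialRing R] (r : R) (n : ℕ) :
    Ring.choose ((n : R) - 1 - r) n = Int.negOnePow n • Ring.choose r n := by
  rw [show (n : R) - 1 - r = -(r - n + 1) by abel, Ring.choose_neg,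
    show r - n + 1 + n - 1 = r by abel]

lemma signPow_mul_choose_mul_signPow_mul_choose (m : ℤ) (i j : ℕ) :
    (signPow ((i : ℤ) - 1 - m - i) * Ring.choose ((i : ℤ) - 1 - m) i) *
      (signPow ((i : ℤ) - 1 - m + j) * Ring.choose ((i : ℤ) - 1 - m + j) j) =
    Ring.choose m (i + j) * (Nat.choose (i + j) j : ℤ) := by
  have hi : Ring.choose ((i : ℤ) - 1 - m) i = (i : ℤ).negOnePow • Ring.choose m i :=
    Ring.choose_natCast_sub_one_sub m i
  have hj : Ring.choose ((i : ℤ) - 1 - m + j) j =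
      (j : ℤ).negOnePow • Ring.choose (m - i) j := by
    rw [← Ring.choose_natCast_sub_one_sub]; ring_nf
  have hij : Ring.choose m i * Ring.choose (m - i) j =
      (i + j).choose i * Ring.choose m (i + j) := by
    rw [← nsmul_eq_mul, Ring.choose_smul_choose m (Nat.le_add_right i j),
      Nat.add_sub_cancel_left]
  have hsign : ((i : ℤ) - 1 - m - i).negOnePow * ((i : ℤ) - 1 - m + j).negOnePow *
      (i : ℤ).negOnePow * (j : ℤ).negOnePow = 1 := by
    rw [← Int.negOnePow_add, ← Int.negOnePow_add, ← Int.negOnePow_add,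
      show (i : ℤ) - 1 - m - i + ((i : ℤ) - 1 - m + j) + i + j = 2 * (i + j - 1 - m) by ring,
      Int.negOnePow_two_mul]
  calc _ = ((((i : ℤ) - 1 - m - i).negOnePow * ((i : ℤ) - 1 - m + j).negOnePow *
          (i : ℤ).negOnePow * (j : ℤ).negOnePow : ℤˣ) : ℤ) *
        (Ring.choose m i * Ring.choose (m - i) j) := by
        rw [hi, hj, signPow_eq_negOnePow, signPow_eq_negOnePow]
        simp only [Units.smul_def, Units.val_mul, smul_eq_mul]
        ring
    _ = _ := by rw [hsign, hij, Units.val_one, one_mul, Nat.choose_symm_add, mul_comm]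

lemma hasFiniteSupport_comp_add_natCast {M : Type*} [Zero M] {b : ℤ → M}
    (hb : ∃ N : ℤ, ∀ n : ℤ, N < n → b n = 0) (q : ℤ) :
    HasFiniteSupport fun j : ℕ => b (q + j) := by
  obtain ⟨N, hN⟩ := hb
  refine (Set.finite_Iic (N - q).toNat).subset fun j hj => ?_
  by_contra hjN
  simp only [Set.mem_Iic, not_le] at hjN
  exact hj (hN _ (by omega))

lemma hasFiniteSupport_iterate_comp_add_natCast {M : Type*} [Zero M] {f : M → M}
    (hf : f 0 = 0) {b : ℤ → M} (hb : ∃ N : ℤ, ∀ n : ℤ, N < n → b n = 0) (q : ℤ) :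
    HasFiniteSupport fun j : ℕ => f^[j] (b (q + j)) :=
  (hasFiniteSupport_comp_add_natCast hb q).subset <| support_subset_iff'.2 fun j hj => by
    rw [notMem_support.1 hj, iterate_fixed hf]

lemma smul_mul_adjointCoeff {A : Type*} [CommRing A] {f : A → A} (hf : f 0 = 0)
    {b : ℤ → A} (hb : ∃ N : ℤ, ∀ n : ℤ, N < n → b n = 0) (c : ℤ) (x : A) (q : ℤ) :
    c • (x * adjointCoeff f b q) =
      ∑ᶠ j : ℕ, (c * (signPow (q + j) * Ring.choose (q + j) j)) •
        (x * f^[j] (b (q + j))) := by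
  have h := (hasFiniteSupport_iterate_comp_add_natCast hf hb q).fun_smul_right
    fun j : ℕ => signPow (q + j) * Ring.choose (q + j) j
  rw [adjointCoeff, mul_finsum' _ _ h, smul_finsum' _ (h.fun_mul_right fun _ => x)]
  exact finsum_congr fun j => by rw [mul_smul_comm, smul_smul]

theorem res_adjoint_shift_identity_general
    (F : Type*) [Field F]
    (A : Type*) [CommRing A] [Algebra F A] (d : Derivation F A A)
    (a b : ℤ → A)
    (hb : ∃ N : ℤ, ∀ n : ℤ, N < n → b n = 0)
    (i : ℕ) :
    (∑ᶠ q : ℤ, (signPow (q - (i : ℤ)) * Ring.choose q i) •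
        (a ((i : ℤ) - q - 1) * adjointCoeff (⇑d) b q)) =
      ∑ᶠ m : ℤ, ∑ᶠ k : ℕ,
        (Ring.choose m (i + k) * (Nat.choose (i + k) k : ℤ)) •
          (a m * (⇑d)^[k] (b ((i : ℤ) + (k : ℤ) - m - 1))) := by
  calc _ = ∑ᶠ q : ℤ, ∑ᶠ k : ℕ, ((signPow (q - i) * Ring.choose q i) *
          (signPow (q + k) * Ring.choose (q + k) k)) • (a (i - q - 1) * d^[k] (b (q + k))) :=
        finsum_congr fun q => smul_mul_adjointCoeff d.map_zero hb _ _ q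
    _ = ∑ᶠ m : ℤ, ∑ᶠ k : ℕ,
          ((signPow ((i : ℤ) - 1 - m - i) * Ring.choose ((i : ℤ) - 1 - m) i) *
          (signPow ((i : ℤ) - 1 - m + k) * Ring.choose ((i : ℤ) - 1 - m + k) k)) •
            (a (i - ((i : ℤ) - 1 - m) - 1) * d^[k] (b ((i : ℤ) - 1 - m + k))) :=
        (finsum_comp_equiv (Equiv.subLeft ((i : ℤ) - 1))).symm
    _ = _ := finsum_congr fun m => finsum_congr fun k => by
        rw [signPow_mul_choose_mul_signPow_mul_choose,
          show (i : ℤ) - ((i : ℤ) - 1 - m) - 1 = m by ring,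
          show (i : ℤ) - 1 - m + k = i + k - m - 1 by ring]

theorem res_adjoint_shift_identity
    (F : Type*) [Field F] [CharZero F]
    (A : Type*) [CommRing A] [Algebra F A] (d : Derivation F A A)
    (a b : ℤ → A)
    (ha : ∃ N : ℤ, ∀ n : ℤ, N < n → a n = 0)
    (hb : ∃ N : ℤ, ∀ n : ℤ, N < n → b n = 0)
    (i : ℕ) :
    (∑ᶠ q : ℤ, (signPow (q - (i : ℤ)) * Ring.choose q i) •
        (a ((i : ℤ) - q - 1) * adjointCoeff (⇑d) b q)) =
      ∑ᶠ m : ℤ, ∑ᶠ k : ℕ,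
        (Ring.choose m (i + k) * (Nat.choose (i + k) k : ℤ)) •
          (a m * (⇑d)^[k] (b ((i : ℤ) + (k : ℤ) - m - 1))) :=
  res_adjoint_shift_identity_general F A d a b hb i
end

section
/- Let V be a differential algebra with λ-bracket given on generators by a matrix H ∈ Mat_{I×I}V[λ] via the Master Formula. Then the λ-bracket is skew-symmetric, i.e. {f_λ g} = −{g_{−λ−∂} f} for all f,g ∈ V, if and only if skew-symmetry holds on the generators u_i, which is equivalent to skewadjointness of the matrix differential operator H(∂). -/
/-!
STATEMENT 11: Let `V = F[u_i^{(n)} | i ∈ I, n ∈ ℕ]` with derivation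
`∂ u_i^{(n)} = u_i^{(n+1)}`, and let `H = (H_{ij}(λ))` be a matrix of polynomials
in `λ` with coefficients in `V`.  The λ-bracket defined by the Master Formula
`{f_λ g}_H = ∑ (∂g/∂u_j^{(n)}) (λ+∂)^n H_{ji}(λ+∂) (−λ−∂)^m (∂f/∂u_i^{(m)})`
is skew-symmetric (`{f_λ g} = −{g_{−λ−∂} f}` for all `f, g`) iff skew-symmetry
holds on the generators `u_i = u_i^{(0)}`, and the latter is equivalent to
skewadjointness of `H`, i.e. `H_{ij}(λ) = −H_{ji}(−λ−∂)`.

λ-polynomials are elements of `Polynomial V`; `(λ+∂)` and `(−λ−∂)` act on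
`Polynomial V` with `∂` applied to coefficients.
-/

open Polynomial

variable {V : Type*} [CommRing V]

/-- `∂` applied to the coefficients of a λ-polynomial. -/
noncomputable def derPoly (d : V → V) (p : Polynomial V) : Polynomial V :=
  p.sum fun n c => Polynomial.C (d c) * Polynomial.X ^ n

/-- The operator `λ + ∂` on λ-polynomials. -/
noncomputable def lamPlusDel (d : V → V) (p : Polynomial V) : Polynomial V :=
  Polynomial.X * p + derPoly d p

/-- The operator `−λ − ∂` on λ-polynomials. -/
noncomputable def negLamDel (d : V → V) (p : Polynomial V) : Polynomial V :=
  -(Polynomial.X * p) - derPoly d p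

/-- `q = {f_λ g} ↦ −{f_{−λ−∂} g}`-type transform: sends `∑ λ^n c_n` to
`−∑ (−λ−∂)^n c_n`. -/
noncomputable def skewTransform (d : V → V) (q : Polynomial V) : Polynomial V :=
  -(q.sum fun n c => (negLamDel d)^[n] (Polynomial.C c))

/-- The Master Formula λ-bracket associated to `H : I × I → (Polynomial V)` on the
algebra of differential polynomials `V = MvPolynomial (I × ℕ) F`. -/
noncomputable def masterBracket {F : Type*} [Field F] {I : Type*}
    (der : MvPolynomial (I × ℕ) F → MvPolynomial (I × ℕ) F)
    (H : I → I → Polynomial (MvPolynomial (I × ℕ) F))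
    (f g : MvPolynomial (I × ℕ) F) : Polynomial (MvPolynomial (I × ℕ) F) :=
  ∑ᶠ p : I × ℕ, ∑ᶠ q : I × ℕ,
    Polynomial.C (MvPolynomial.pderiv q g) *
      (lamPlusDel der)^[q.2]
        ((H q.1 p.1).sum fun k a =>
          Polynomial.C a *
            (lamPlusDel der)^[k]
              ((negLamDel der)^[p.2] (Polynomial.C (MvPolynomial.pderiv p f))))

/-!
Read a λ-polynomial `p = ∑ p_k λ^k` as the symbol of the differential operator `p(∂) = ∑ p_k ∂^k`.
Then `p(λ+∂) w` is the symbol of the composite `p(∂) ∘ w(∂)`, and `∑ (−λ−∂)^n c_n` is the symbol of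
the formal adjoint `∑ (−∂)^n ∘ c_n`. Formal adjunction is an involution reversing composition, and
each term of the Master Formula is the symbol of a composite `g' ∘ ∂^n ∘ H_{ji}(∂) ∘ (−∂)^m ∘ f'`
(with `f', g'` partial derivatives of `f, g`). Hence the skew transform of `{g_λ f}_H` is
`{f_λ g}_{H^*}`, where `H^*_{ij} = −H_{ji}(−λ−∂)`. As `{(u_i)_λ u_j}_H = H_{ji}`, each of the three
conditions says `H^* = H`.
-/

section Symbols

variable {R : Type*} [CommRing R] [Algebra R V] (D : Derivation R V V)

theorem coeff_derPoly (p : V[X]) (n : ℕ) : (derPoly D p).coeff n = D (p.coeff n) := by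
  classical
  simp only [derPoly, Polynomial.sum_def, Polynomial.finsetSum_coeff, coeff_C_mul_X_pow]
  rw [Finset.sum_ite_eq p.support n]
  split_ifs with h
  · rfl
  · rw [notMem_support_iff.mp h, map_zero]

theorem derPoly_monomial (n : ℕ) (a : V) : derPoly D (monomial n a) = monomial n (D a) := by
  ext k
  simp only [coeff_derPoly, coeff_monomial, apply_ite D, map_zero]

theorem derPoly_C (a : V) : derPoly D (C a) = C (D a) := by
  simpa only [monomial_zero_left] using derPoly_monomial D 0 a

theorem derPoly_C_mul (a : V) (p : V[X]) :
    derPoly D (C a * p) = C a * derPoly D p + C (D a) * p := by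
  ext k
  simp only [coeff_derPoly, coeff_add, coeff_C_mul, Derivation.leibniz, smul_eq_mul]
  ring

theorem derPoly_negLamDel (p : V[X]) : derPoly D (negLamDel D p) = negLamDel D (derPoly D p) := by
  ext (_ | k) <;> simp [negLamDel, coeff_derPoly, coeff_X_mul]

theorem lamPlusDel_add (p q : V[X]) :
    lamPlusDel D (p + q) = lamPlusDel D p + lamPlusDel D q := by
  ext k
  simp only [lamPlusDel, coeff_add, coeff_derPoly, map_add, mul_add]
  ring

theorem lamPlusDel_monomial (n : ℕ) (a : V) :
    lamPlusDel D (monomial n a) = monomial (n + 1) a + monomial n (D a) := by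
  rw [lamPlusDel, X_mul_monomial, derPoly_monomial]

theorem lamPlusDel_C_mul (a : V) (p : V[X]) :
    lamPlusDel D (C a * p) = C a * lamPlusDel D p + C (D a) * p := by
  rw [lamPlusDel, lamPlusDel, derPoly_C_mul]
  ring

theorem iterate_lamPlusDel_add (k : ℕ) (p q : V[X]) :
    (lamPlusDel D)^[k] (p + q) = (lamPlusDel D)^[k] p + (lamPlusDel D)^[k] q :=
  iterate_map_add (AddMonoidHom.mk' (lamPlusDel D) (lamPlusDel_add D)) k p q

theorem iterate_lamPlusDel_one (k : ℕ) : (lamPlusDel D)^[k] 1 = monomial k 1 := by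
  induction k with
  | zero => rfl
  | succ k ih =>
    rw [Function.iterate_succ_apply', ih, lamPlusDel_monomial, D.map_one_eq_zero,
      monomial_zero_right, add_zero]

theorem negLamDel_eq_neg_lamPlusDel (p : V[X]) : negLamDel D p = -lamPlusDel D p := by
  rw [negLamDel, lamPlusDel, neg_add']

theorem negLamDel_add (p q : V[X]) : negLamDel D (p + q) = negLamDel D p + negLamDel D q := by
  simp only [negLamDel_eq_neg_lamPlusDel, lamPlusDel_add, neg_add]

theorem iterate_negLamDel_add (k : ℕ) (p q : V[X]) :
    (negLamDel D)^[k] (p + q) = (negLamDel D)^[k] p + (negLamDel D)^[k] q :=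
  iterate_map_add (AddMonoidHom.mk' (negLamDel D) (negLamDel_add D)) k p q

theorem iterate_negLamDel_zero (k : ℕ) : (negLamDel D)^[k] 0 = 0 :=
  iterate_map_zero (AddMonoidHom.mk' (negLamDel D) (negLamDel_add D)) k

/-- `evalLamPlusDel D p w = p(λ+∂) w`. Reading a λ-polynomial `p` as the symbol of the differential
operator `p(∂)`, this is the symbol of the composite `p(∂) ∘ w(∂)`. -/
noncomputable def evalLamPlusDel : V[X] →+ V[X] →+ V[X] :=
  AddMonoidHom.mk'
    (fun p => AddMonoidHom.mk' (fun w => p.sum fun k a => C a * (lamPlusDel D)^[k] w)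
      fun w₁ w₂ => by
        simp only [Polynomial.sum_def, iterate_lamPlusDel_add, mul_add, Finset.sum_add_distrib])
    fun p q => AddMonoidHom.ext fun w =>
      Polynomial.sum_add_index p q (fun k a => C a * (lamPlusDel D)^[k] w)
        (fun _ => by rw [C_0, zero_mul])
        (fun _ _ _ => by rw [C_add, add_mul])

/-- The symbol `∑ (−λ−∂)^n c_n` of the formal adjoint `∑ (−∂)^n ∘ c_n` of `∑ c_n ∂^n`. -/
noncomputable def formalAdjoint : V[X] →+ V[X] :=
  AddMonoidHom.mk' (fun q => q.sum fun n c => (negLamDel D)^[n] (C c)) fun p q =>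
    Polynomial.sum_add_index p q (fun n c => (negLamDel D)^[n] (C c))
      (fun _ => by rw [C_0, iterate_negLamDel_zero])
      (fun _ _ _ => by rw [C_add, iterate_negLamDel_add])

theorem skewTransform_eq_neg_formalAdjoint (q : V[X]) :
    skewTransform D q = -formalAdjoint D q :=
  rfl

theorem evalLamPlusDel_monomial (k : ℕ) (a : V) (w : V[X]) :
    evalLamPlusDel D (monomial k a) w = C a * (lamPlusDel D)^[k] w :=
  Polynomial.sum_monomial_index a (fun k a => C a * (lamPlusDel D)^[k] w) (by rw [C_0, zero_mul])

theorem evalLamPlusDel_C (a : V) (w : V[X]) : evalLamPlusDel D (C a) w = C a * w := by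
  simpa only [monomial_zero_left, Function.iterate_zero_apply] using
    evalLamPlusDel_monomial D 0 a w

theorem evalLamPlusDel_one_left (w : V[X]) : evalLamPlusDel D 1 w = w := by
  rw [← C_1, evalLamPlusDel_C, C_1, one_mul]

theorem evalLamPlusDel_one_right (p : V[X]) : evalLamPlusDel D p 1 = p := by
  induction p using Polynomial.induction_on' with
  | add p q hp hq => rw [map_add, AddMonoidHom.add_apply, hp, hq]
  | monomial n a =>
    rw [evalLamPlusDel_monomial, iterate_lamPlusDel_one, C_mul_monomial, mul_one]

theorem evalLamPlusDel_X_mul (p w : V[X]) :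
    evalLamPlusDel D (X * p) w = evalLamPlusDel D p (lamPlusDel D w) := by
  induction p using Polynomial.induction_on' with
  | add p q hp hq => simp only [mul_add, map_add, AddMonoidHom.add_apply, hp, hq]
  | monomial n a =>
    rw [X_mul_monomial, evalLamPlusDel_monomial, evalLamPlusDel_monomial,
      Function.iterate_succ_apply]

theorem C_mul_evalLamPlusDel (a : V) (p w : V[X]) :
    C a * evalLamPlusDel D p w = evalLamPlusDel D (C a * p) w := by
  induction p using Polynomial.induction_on' with
  | add p q hp hq => simp only [mul_add, map_add, AddMonoidHom.add_apply, hp, hq]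
  | monomial n b =>
    rw [evalLamPlusDel_monomial, C_mul_monomial, evalLamPlusDel_monomial, C_mul, mul_assoc]

theorem lamPlusDel_evalLamPlusDel (p w : V[X]) :
    lamPlusDel D (evalLamPlusDel D p w) = evalLamPlusDel D (lamPlusDel D p) w := by
  induction p using Polynomial.induction_on' with
  | add p q hp hq =>
    simp only [map_add, AddMonoidHom.add_apply, lamPlusDel_add, hp, hq]
  | monomial n a =>
    rw [evalLamPlusDel_monomial, lamPlusDel_C_mul, lamPlusDel_monomial, map_add,
      AddMonoidHom.add_apply, evalLamPlusDel_monomial, evalLamPlusDel_monomial,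
      Function.iterate_succ_apply']

theorem negLamDel_evalLamPlusDel (p w : V[X]) :
    negLamDel D (evalLamPlusDel D p w) = evalLamPlusDel D (negLamDel D p) w := by
  rw [negLamDel_eq_neg_lamPlusDel, negLamDel_eq_neg_lamPlusDel, lamPlusDel_evalLamPlusDel, map_neg,
    AddMonoidHom.neg_apply]

theorem evalLamPlusDel_evalLamPlusDel (p q w : V[X]) :
    evalLamPlusDel D p (evalLamPlusDel D q w) = evalLamPlusDel D (evalLamPlusDel D p q) w := by
  induction p using Polynomial.induction_on' with
  | add p p' hp hp' => simp only [map_add, AddMonoidHom.add_apply, hp, hp']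
  | monomial n a =>
    have hcomm : Function.Semiconj (evalLamPlusDel D · w) (lamPlusDel D) (lamPlusDel D) :=
      fun q => (lamPlusDel_evalLamPlusDel D q w).symm
    rw [evalLamPlusDel_monomial, evalLamPlusDel_monomial, ← (hcomm.iterate_right n).eq,
      C_mul_evalLamPlusDel]

theorem formalAdjoint_monomial (n : ℕ) (a : V) :
    formalAdjoint D (monomial n a) = (negLamDel D)^[n] (C a) :=
  Polynomial.sum_monomial_index a (fun n c => (negLamDel D)^[n] (C c))
    (by rw [C_0, iterate_negLamDel_zero])

theorem formalAdjoint_C (a : V) : formalAdjoint D (C a) = C a := by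
  simpa only [monomial_zero_left, Function.iterate_zero_apply] using formalAdjoint_monomial D 0 a

theorem formalAdjoint_C_mul (a : V) (q : V[X]) :
    formalAdjoint D (C a * q) = evalLamPlusDel D (formalAdjoint D q) (C a) := by
  induction q using Polynomial.induction_on' with
  | add q q' hq hq' => simp only [mul_add, map_add, AddMonoidHom.add_apply, hq, hq']
  | monomial n b =>
    have hcomm : Function.Semiconj (evalLamPlusDel D · (C a)) (negLamDel D) (negLamDel D) :=
      fun q => (negLamDel_evalLamPlusDel D q (C a)).symm
    rw [C_mul_monomial, formalAdjoint_monomial, formalAdjoint_monomial,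
      (hcomm.iterate_right n).eq, evalLamPlusDel_C, ← C_mul, mul_comm]

theorem formalAdjoint_lamPlusDel (q : V[X]) :
    formalAdjoint D (lamPlusDel D q) = -(X * formalAdjoint D q) := by
  induction q using Polynomial.induction_on' with
  | add q q' hq hq' => rw [lamPlusDel_add, map_add, map_add, hq, hq', mul_add, neg_add]
  | monomial n b =>
    have hcomm : Function.Commute (derPoly D) (negLamDel D) := derPoly_negLamDel D
    rw [lamPlusDel_monomial, map_add, formalAdjoint_monomial, formalAdjoint_monomial,
      formalAdjoint_monomial, Function.iterate_succ_apply', ← derPoly_C,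
      ← (hcomm.iterate_right n).eq, negLamDel]
    abel

theorem formalAdjoint_iterate_negLamDel (n : ℕ) (q : V[X]) :
    formalAdjoint D ((negLamDel D)^[n] q) = X ^ n * formalAdjoint D q := by
  induction n with
  | zero => rw [Function.iterate_zero_apply, pow_zero, one_mul]
  | succ n ih =>
    rw [Function.iterate_succ_apply', negLamDel_eq_neg_lamPlusDel, map_neg,
      formalAdjoint_lamPlusDel, ih, neg_neg, pow_succ', mul_assoc]

theorem formalAdjoint_formalAdjoint (p : V[X]) : formalAdjoint D (formalAdjoint D p) = p := by
  induction p using Polynomial.induction_on' with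
  | add p q hp hq => rw [map_add, map_add, hp, hq]
  | monomial n a =>
    rw [formalAdjoint_monomial, formalAdjoint_iterate_negLamDel, formalAdjoint_C,
      X_pow_mul, C_mul_X_pow_eq_monomial]

theorem formalAdjoint_evalLamPlusDel (p q : V[X]) :
    formalAdjoint D (evalLamPlusDel D p q) =
      evalLamPlusDel D (formalAdjoint D q) (formalAdjoint D p) := by
  induction p using Polynomial.induction_on' generalizing q with
  | add p p' hp hp' => simp only [map_add, AddMonoidHom.add_apply, hp, hp']
  | monomial n a =>
    induction n generalizing q with
    | zero =>
      rw [monomial_zero_left, evalLamPlusDel_C, formalAdjoint_C_mul, formalAdjoint_C]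
    | succ n ih =>
      have hshift : evalLamPlusDel D (monomial (n + 1) a) q =
          evalLamPlusDel D (monomial n a) (lamPlusDel D q) := by
        rw [evalLamPlusDel_monomial, evalLamPlusDel_monomial, Function.iterate_succ_apply]
      rw [hshift, ih, formalAdjoint_lamPlusDel, map_neg, AddMonoidHom.neg_apply,
        evalLamPlusDel_X_mul, formalAdjoint_monomial, formalAdjoint_monomial,
        Function.iterate_succ_apply' _ n, negLamDel_eq_neg_lamPlusDel, map_neg]

theorem skewTransform_evalLamPlusDel_evalLamPlusDel_formalAdjoint (P h Q : V[X]) :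
    skewTransform D (evalLamPlusDel D P (evalLamPlusDel D h (formalAdjoint D Q))) =
      evalLamPlusDel D Q (evalLamPlusDel D (skewTransform D h) (formalAdjoint D P)) := by
  rw [skewTransform_eq_neg_formalAdjoint, skewTransform_eq_neg_formalAdjoint,
    formalAdjoint_evalLamPlusDel, formalAdjoint_evalLamPlusDel, formalAdjoint_formalAdjoint,
    ← evalLamPlusDel_evalLamPlusDel, map_neg, AddMonoidHom.neg_apply, ← map_neg]

end Symbols

section MasterFormula

variable {F : Type*} [Field F] {I : Type*}
  (D : Derivation F (MvPolynomial (I × ℕ) F) (MvPolynomial (I × ℕ) F))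
  (H : I → I → (MvPolynomial (I × ℕ) F)[X])

open MvPolynomial in
theorem masterBracket_eq_sum (f g : MvPolynomial (I × ℕ) F) (s t : Finset (I × ℕ))
    (hs : ∀ p ∉ s, pderiv p f = 0) (ht : ∀ q ∉ t, pderiv q g = 0) :
    masterBracket D H f g = ∑ p ∈ s, ∑ q ∈ t,
      evalLamPlusDel D (monomial q.2 (pderiv q g))
        (evalLamPlusDel D (H q.1 p.1) (formalAdjoint D (monomial p.2 (pderiv p f)))) := by
  have hfinsum : masterBracket D H f g = ∑ᶠ p, ∑ᶠ q,
      evalLamPlusDel D (monomial q.2 (pderiv q g))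
        (evalLamPlusDel D (H q.1 p.1) (formalAdjoint D (monomial p.2 (pderiv p f)))) := by
    simp only [evalLamPlusDel_monomial, formalAdjoint_monomial]
    rfl
  rw [hfinsum, finsum_eq_finsetSum_of_support_subset _ (s := s)]
  · refine Finset.sum_congr rfl fun p _ => finsum_eq_finsetSum_of_support_subset _ ?_
    exact Function.support_subset_iff'.mpr fun q hq => by simp [ht q hq]
  · exact Function.support_subset_iff'.mpr fun p hp => by simp [hs p hp]

theorem masterBracket_X_X (i j : I) :
    masterBracket D H (MvPolynomial.X (i, 0)) (MvPolynomial.X (j, 0)) = H j i := by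
  rw [masterBracket_eq_sum D H _ _ {(i, 0)} {(j, 0)}
    (fun p hp => MvPolynomial.pderiv_X_of_ne (Ne.symm (Finset.notMem_singleton.mp hp)))
    (fun q hq => MvPolynomial.pderiv_X_of_ne (Ne.symm (Finset.notMem_singleton.mp hq)))]
  rw [Finset.sum_singleton, Finset.sum_singleton, MvPolynomial.pderiv_X_self,
    MvPolynomial.pderiv_X_self, monomial_zero_left, formalAdjoint_C, C_1, evalLamPlusDel_one_right,
    evalLamPlusDel_one_left]

theorem skewTransform_masterBracket (f g : MvPolynomial (I × ℕ) F) :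
    skewTransform D (masterBracket D H g f) =
      masterBracket D (fun i j => skewTransform D (H j i)) f g := by
  classical
  have hvars (φ : MvPolynomial (I × ℕ) F) (p : I × ℕ) (hp : p ∉ φ.vars) :
      MvPolynomial.pderiv p φ = 0 :=
    MvPolynomial.pderiv_eq_zero_of_notMem_vars hp
  rw [masterBracket_eq_sum D H g f _ _ (hvars g) (hvars f),
    masterBracket_eq_sum D _ f g _ _ (hvars f) (hvars g), Finset.sum_comm,
    skewTransform_eq_neg_formalAdjoint, map_sum, ← Finset.sum_neg_distrib]
  refine Finset.sum_congr rfl fun q _ => ?_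
  rw [map_sum, ← Finset.sum_neg_distrib]
  refine Finset.sum_congr rfl fun p _ => ?_
  exact skewTransform_evalLamPlusDel_evalLamPlusDel_formalAdjoint D _ _ _

end MasterFormula

theorem master_formula_skew_symmetry_iff_general
    (F : Type*) [Field F] (I : Type*)
    (H : I → I → Polynomial (MvPolynomial (I × ℕ) F)) :
    let der : MvPolynomial (I × ℕ) F → MvPolynomial (I × ℕ) F :=
      ⇑(MvPolynomial.mkDerivation F
          (fun p : I × ℕ => (MvPolynomial.X (p.1, p.2 + 1) : MvPolynomial (I × ℕ) F)))
    let br := masterBracket der H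
    ((∀ f g : MvPolynomial (I × ℕ) F, br f g = skewTransform der (br g f)) ↔
      (∀ i j : I, br (MvPolynomial.X (i, 0)) (MvPolynomial.X (j, 0)) =
        skewTransform der (br (MvPolynomial.X (j, 0)) (MvPolynomial.X (i, 0))))) ∧
    ((∀ i j : I, br (MvPolynomial.X (i, 0)) (MvPolynomial.X (j, 0)) =
        skewTransform der (br (MvPolynomial.X (j, 0)) (MvPolynomial.X (i, 0)))) ↔
      (∀ i j : I, H i j = skewTransform der (H j i))) := by
  intro der br
  have hgen (i j : I) : br (MvPolynomial.X (i, 0)) (MvPolynomial.X (j, 0)) = H j i :=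
    masterBracket_X_X _ H i j
  simp only [hgen]
  refine ⟨⟨fun h i j => ?_, fun h f g => ?_⟩, ⟨fun h i j => h j i, fun h i j => h j i⟩⟩
  · simpa only [hgen] using h (MvPolynomial.X (i, 0)) (MvPolynomial.X (j, 0))
  · have hskew : (fun i j => skewTransform der (H j i)) = H := funext₂ fun i j => (h j i).symm
    rw [skewTransform_masterBracket, hskew]

theorem master_formula_skew_symmetry_iff
    (F : Type*) [Field F] [CharZero F] (I : Type*)
    (H : I → I → Polynomial (MvPolynomial (I × ℕ) F)) :
    let der : MvPolynomial (I × ℕ) F → MvPolynomial (I × ℕ) F :=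
      ⇑(MvPolynomial.mkDerivation F
          (fun p : I × ℕ => (MvPolynomial.X (p.1, p.2 + 1) : MvPolynomial (I × ℕ) F)))
    let br := masterBracket der H
    ((∀ f g : MvPolynomial (I × ℕ) F, br f g = skewTransform der (br g f)) ↔
      (∀ i j : I, br (MvPolynomial.X (i, 0)) (MvPolynomial.X (j, 0)) =
        skewTransform der (br (MvPolynomial.X (j, 0)) (MvPolynomial.X (i, 0))))) ∧
    ((∀ i j : I, br (MvPolynomial.X (i, 0)) (MvPolynomial.X (j, 0)) =
        skewTransform der (br (MvPolynomial.X (j, 0)) (MvPolynomial.X (i, 0)))) ↔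
      (∀ i j : I, H i j = skewTransform der (H j i))) :=
  master_formula_skew_symmetry_iff_general F I H
end

section
/- Let V be a PVA with compatible λ-brackets {·_λ·}₀ and {·_λ·}₁, and suppose a sequence of local functionals ∫h_n ∈ V/∂V satisfies the Lenard-Magri recursion {∫h_n, u}₁ = {∫h_{n+1}, u}₀ for all n ≥ 0 and u ∈ V, together with {∫h₀, u}₀ = 0 for all u ∈ V. Then the local functionals are in involution with respect to both brackets: {∫h_m, ∫h_n}_δ = 0 for all m, n ≥ 0 and δ = 0, 1. -/
/-!
STATEMENT 14: Let `V` carry two compatible PVA λ-brackets `br0`, `br1` (their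
sum, hence any linear combination, is again a PVA λ-bracket), and suppose the
local functionals `∫ h n` satisfy the Lenard-Magri recursion
`{∫h_n, u}₁ = {∫h_{n+1}, u}₀` for all `n` and `u ∈ V`, together with
`{∫h₀, u}₀ = 0` for all `u`.  Then `{∫h_m, ∫h_n}_δ = 0` in `V/∂V` for all `m, n`
and `δ = 0, 1`, i.e. `{h_m λ h_n}_δ |_{λ=0} ∈ ∂V`.
-/

open Polynomial

variable {V : Type*} [CommRing V]

noncomputable def shiftApply (d : V → V) (q : Polynomial V) (h : V) : Polynomial V :=
  q.sum fun n e => Polynomial.C e * (lamPlusDel d)^[n] (Polynomial.C h)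

noncomputable def jac1 (br : V → V → Polynomial V) (f g h : V) :
    Polynomial (Polynomial V) :=
  (br g h).sum fun n c => Polynomial.C (br f c) * Polynomial.X ^ n

noncomputable def jac2 (br : V → V → Polynomial V) (f g h : V) :
    Polynomial (Polynomial V) :=
  (br f h).sum fun m dd => (br g dd).sum fun n e =>
    Polynomial.C (Polynomial.C e * Polynomial.X ^ m) * Polynomial.X ^ n

noncomputable def jac3 (br : V → V → Polynomial V) (f g h : V) :
    Polynomial (Polynomial V) :=
  (br f g).sum fun m dd => Polynomial.C (Polynomial.X ^ m) *
    ((br dd h).sum fun k e =>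
      Polynomial.C (Polynomial.C e) * (Polynomial.C Polynomial.X + Polynomial.X) ^ k)

structure IsPVA (d : V → V) (br : V → V → Polynomial V) : Prop where
  d_add : ∀ a b : V, d (a + b) = d a + d b
  d_mul : ∀ a b : V, d (a * b) = d a * b + a * d b
  add_left : ∀ a b c : V, br (a + b) c = br a c + br b c
  add_right : ∀ a b c : V, br a (b + c) = br a b + br a c
  sesq_left : ∀ a b : V, br (d a) b = -(Polynomial.X * br a b)
  sesq_right : ∀ a b : V, br a (d b) = lamPlusDel d (br a b)
  leibniz_right : ∀ a b c : V, br a (b * c) = br a b * Polynomial.C c + br a c * Polynomial.C b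
  leibniz_left : ∀ a b c : V,
    br (a * b) c = shiftApply d (br a c) b + shiftApply d (br b c) a
  skew : ∀ a b : V, br b a = skewTransform d (br a b)
  jacobi : ∀ f g h : V, jac1 br f g h - jac2 br f g h = jac3 br f g h

section LMAux

lemma lm_d_zero (d : V → V) (hd : ∀ a b : V, d (a + b) = d a + d b) : d 0 = 0 := by
  have h := hd 0 0
  rw [add_zero] at h
  have : d 0 + d 0 = d 0 + 0 := by rw [← h, add_zero]
  exact add_left_cancel this

lemma lm_d_neg (d : V → V) (hd : ∀ a b : V, d (a + b) = d a + d b) (a : V) :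
    d (-a) = -d a := by
  have h : d a + d (-a) = 0 := by rw [← hd, add_neg_cancel, lm_d_zero d hd]
  exact eq_neg_of_add_eq_zero_right h

noncomputable def rangeD (d : V → V) (hd : ∀ a b : V, d (a + b) = d a + d b) :
    AddSubgroup V where
  carrier := Set.range d
  zero_mem' := ⟨0, lm_d_zero d hd⟩
  add_mem' := by rintro a b ⟨x, rfl⟩ ⟨y, rfl⟩; exact ⟨x + y, hd x y⟩
  neg_mem' := by rintro a ⟨x, rfl⟩; exact ⟨-x, lm_d_neg d hd x⟩

lemma lm_g_zero (d : V → V) (hd : ∀ a b : V, d (a + b) = d a + d b) (n : ℕ) :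
    (fun x => -d x)^[n] (0 : V) = 0 := by
  induction n with
  | zero => simp
  | succ k ih => rw [Function.iterate_succ_apply', ih]; simp [lm_d_zero d hd]

lemma lm_g_add (d : V → V) (hd : ∀ a b : V, d (a + b) = d a + d b) (n : ℕ) (a b : V) :
    (fun x => -d x)^[n] (a + b) = (fun x => -d x)^[n] a + (fun x => -d x)^[n] b := by
  induction n with
  | zero => simp
  | succ k ih =>
      rw [Function.iterate_succ_apply', ih, Function.iterate_succ_apply',
        Function.iterate_succ_apply']
      simp only [hd]
      ring

lemma lm_eval0_derPoly (d : V → V) (hd : ∀ a b : V, d (a + b) = d a + d b)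
    (p : Polynomial V) : (derPoly d p).eval 0 = d (p.eval 0) := by
  rw [derPoly, Polynomial.sum_def, Polynomial.eval_finset_sum, ← Polynomial.coeff_zero_eq_eval_zero]
  rw [Finset.sum_eq_single 0]
  · simp
  · intro b _ hb; simp [zero_pow hb]
  · intro h0; simp [Polynomial.notMem_support_iff.mp h0, lm_d_zero d hd]

lemma lm_eval0_negLamDel (d : V → V) (hd : ∀ a b : V, d (a + b) = d a + d b)
    (p : Polynomial V) : (negLamDel d p).eval 0 = -d (p.eval 0) := by
  simp [negLamDel, lm_eval0_derPoly d hd p]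

lemma lm_eval0_iter (d : V → V) (hd : ∀ a b : V, d (a + b) = d a + d b) (n : ℕ) (c : V) :
    ((negLamDel d)^[n] (Polynomial.C c)).eval 0 = (fun x => -d x)^[n] c := by
  induction n with
  | zero => simp
  | succ k ih =>
      rw [Function.iterate_succ_apply', Function.iterate_succ_apply',
        lm_eval0_negLamDel d hd, ih]

lemma lm_sum_g_mem (d : V → V) (hd : ∀ a b : V, d (a + b) = d a + d b)
    (q : Polynomial V) :
    (q.sum fun n c => (fun x => -d x)^[n] c) - q.eval 0 ∈ rangeD d hd := by
  induction q using Polynomial.induction_on' with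
  | add p r hp hr =>
      rw [Polynomial.sum_add_index p r _ (fun n => lm_g_zero d hd n)
        (fun n a b => lm_g_add d hd n a b), Polynomial.eval_add]
      have := (rangeD d hd).add_mem hp hr
      convert this using 1; ring
  | monomial n a =>
      rw [Polynomial.sum_monomial_index a _ (lm_g_zero d hd n), Polynomial.eval_monomial]
      cases n with
      | zero => simpa using (rangeD d hd).zero_mem
      | succ k =>
          refine ⟨-((fun x => -d x)^[k] a), ?_⟩
          rw [lm_d_neg d hd, Function.iterate_succ_apply']
          simp

lemma lm_eval0_skewTransform (d : V → V) (hd : ∀ a b : V, d (a + b) = d a + d b)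
    (q : Polynomial V) :
    (skewTransform d q).eval 0 + q.eval 0 ∈ rangeD d hd := by
  have hS : (skewTransform d q).eval 0 = -(q.sum fun n c => (fun x => -d x)^[n] c) := by
    rw [skewTransform, Polynomial.eval_neg, Polynomial.sum_def, Polynomial.sum_def,
      Polynomial.eval_finset_sum]
    congr 1
    exact Finset.sum_congr rfl fun n _ => lm_eval0_iter d hd n _
  rw [hS]
  have := (rangeD d hd).neg_mem (lm_sum_g_mem d hd q)
  convert this using 1; ring

lemma lm_pva_skew (d : V → V) (hd : ∀ a b : V, d (a + b) = d a + d b)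
    {br : V → V → Polynomial V} (hbr : IsPVA d br) (a b : V) :
    (br a b).eval 0 + (br b a).eval 0 ∈ rangeD d hd := by
  rw [hbr.skew a b]
  have := lm_eval0_skewTransform d hd (br a b)
  convert this using 1; ring

end LMAux

theorem lenard_magri_involution
    (d : V → V) (br0 br1 : V → V → Polynomial V)
    (h0 : IsPVA d br0) (h1 : IsPVA d br1)
    -- compatibility: the sum of the two λ-brackets is again a PVA λ-bracket
    (hcomp : IsPVA d (fun f g => br0 f g + br1 f g))
    (h : ℕ → V)
    (hrec : ∀ (n : ℕ) (u : V), (br1 (h n) u).eval 0 = (br0 (h (n + 1)) u).eval 0)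
    (hstart : ∀ u : V, (br0 (h 0) u).eval 0 = 0) :
    ∀ m n : ℕ,
      (br0 (h m) (h n)).eval 0 ∈ Set.range d ∧
      (br1 (h m) (h n)).eval 0 ∈ Set.range d := by
  set D := rangeD d h0.d_add with hD
  have key : ∀ m n : ℕ, (br0 (h m) (h n)).eval 0 ∈ D := by
    intro m
    induction m with
    | zero => intro n; rw [hstart]; exact D.zero_mem
    | succ k ih =>
      intro n
      rw [← hrec k (h n)]
      have s1 := lm_pva_skew d h0.d_add h1 (h k) (h n)
      have e1 : (br1 (h n) (h k)).eval 0 = (br0 (h (n + 1)) (h k)).eval 0 := hrec n (h k)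
      have s0 := lm_pva_skew d h0.d_add h0 (h (n + 1)) (h k)
      have i0 : (br0 (h k) (h (n + 1))).eval 0 ∈ D := ih (n + 1)
      have heq : (br1 (h k) (h n)).eval 0
          = ((br1 (h k) (h n)).eval 0 + (br1 (h n) (h k)).eval 0)
            - ((br0 (h (n + 1)) (h k)).eval 0 + (br0 (h k) (h (n + 1))).eval 0)
            + (br0 (h k) (h (n + 1))).eval 0 := by rw [e1]; ring
      rw [heq]
      exact D.add_mem (D.sub_mem s1 s0) i0
  intro m n
  refine ⟨key m n, ?_⟩
  rw [hrec m (h n)]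
  exact key (m + 1) n
end

section
/- In the W-algebra W₂ = F[u, u′, u″, …] with Virasoro-Magri λ-bracket {u_λ u} = (2λ+∂)u + ½λ³, the differential polynomial u = v′ − v² defines a λ-bracket-preserving map from W₂ to the PVA F[v, v′, v″, …] with {v_λ v} = −½λ: that is, computing {(v′−v²)_λ (v′−v²)} via sesquilinearity and Leibniz rules from {v_λ v} = −½λ yields (2λ+∂)(v′−v²) + ½λ³ evaluated at u = v′−v². -/
/-!
STATEMENT 17: In `F[v, v′, v″, …]` with λ-bracket determined on the generator by
`{v_λ v} = −½λ` and extended by the Master Formula, the Miura element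
`u = v′ − v²` satisfies the Virasoro-Magri relation
`{(v′−v²)_λ (v′−v²)} = (2λ+∂)(v′−v²) + ½λ³`,
i.e. the Miura map `u ↦ v′ − v²` is λ-bracket preserving from `W₂` (with
`{u_λ u} = (2λ+∂)u + ½λ³`) into the GFZ-type PVA `F[v^{(n)}]`.

`F[v^{(n)}]` is encoded as `MvPolynomial ℕ F`, with derivation
`∂ v^{(n)} = v^{(n+1)}`.
-/

open Polynomial

variable {V : Type*} [CommRing V]

/-- The Master Formula λ-bracket in one differential variable, associated to
`{v_λ v} = H(λ)`. -/
noncomputable def masterBracket1 {F : Type*} [Field F]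
    (der : MvPolynomial ℕ F → MvPolynomial ℕ F)
    (H : Polynomial (MvPolynomial ℕ F))
    (f g : MvPolynomial ℕ F) : Polynomial (MvPolynomial ℕ F) :=
  ∑ᶠ m : ℕ, ∑ᶠ n : ℕ,
    Polynomial.C (MvPolynomial.pderiv n g) *
      (lamPlusDel der)^[n]
        (H.sum fun k a =>
          Polynomial.C a *
            (lamPlusDel der)^[k]
              ((negLamDel der)^[m] (Polynomial.C (MvPolynomial.pderiv m f))))


-- auxiliary
noncomputable def mbT {F : Type*} [Field F]
    (der : MvPolynomial ℕ F → MvPolynomial ℕ F)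
    (H : Polynomial (MvPolynomial ℕ F))
    (f g : MvPolynomial ℕ F) (m n : ℕ) : Polynomial (MvPolynomial ℕ F) :=
  Polynomial.C (MvPolynomial.pderiv n g) *
    (lamPlusDel der)^[n]
      (H.sum fun k a =>
        Polynomial.C a *
          (lamPlusDel der)^[k]
            ((negLamDel der)^[m] (Polynomial.C (MvPolynomial.pderiv m f))))

lemma derPoly_zero (d : V → V) : derPoly d 0 = 0 := by simp [derPoly]

lemma lamPlusDel_zero (d : V → V) : lamPlusDel d 0 = 0 := by
  simp [lamPlusDel, derPoly_zero]

lemma negLamDel_zero (d : V → V) : negLamDel d 0 = 0 := by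
  simp [negLamDel, derPoly_zero]

lemma derPoly_monomial_s17 (d : V → V) (h0 : d 0 = 0) (n : ℕ) (a : V) :
    derPoly d (Polynomial.C a * Polynomial.X ^ n) = Polynomial.C (d a) * Polynomial.X ^ n := by
  rw [derPoly, Polynomial.C_mul_X_pow_eq_monomial,
    Polynomial.sum_monomial_index _ _ (by simp [h0]), Polynomial.C_mul_X_pow_eq_monomial]

lemma derPoly_add (d : V → V) (h0 : d 0 = 0)
    (hadd : ∀ a b, d (a + b) = d a + d b) (p q : Polynomial V) :
    derPoly d (p + q) = derPoly d p + derPoly d q := by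
  unfold derPoly
  exact Polynomial.sum_add_index p q _ (by simp [h0])
    (by intro a b c; rw [hadd, map_add, add_mul])

lemma derPoly_C_s17 (d : V → V) (h0 : d 0 = 0) (a : V) :
    derPoly d (Polynomial.C a) = Polynomial.C (d a) := by
  simpa using derPoly_monomial_s17 d h0 0 a

lemma mbT_eq_zero_right {F : Type*} [Field F]
    (der : MvPolynomial ℕ F → MvPolynomial ℕ F)
    (H : Polynomial (MvPolynomial ℕ F)) (f g : MvPolynomial ℕ F) (m n : ℕ)
    (hg : MvPolynomial.pderiv n g = 0) : mbT der H f g m n = 0 := by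
  simp [mbT, hg]

lemma mbT_eq_zero_left {F : Type*} [Field F]
    (der : MvPolynomial ℕ F → MvPolynomial ℕ F)
    (H : Polynomial (MvPolynomial ℕ F)) (f g : MvPolynomial ℕ F) (m n : ℕ)
    (hf : MvPolynomial.pderiv m f = 0) : mbT der H f g m n = 0 := by
  have h1 : (negLamDel der)^[m] (Polynomial.C (MvPolynomial.pderiv m f)) = 0 := by
    rw [hf, map_zero, Function.iterate_fixed (negLamDel_zero der)]
  have h2 : ∀ k : ℕ, (lamPlusDel der)^[k] (0 : Polynomial (MvPolynomial ℕ F)) = 0 :=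
    fun k => Function.iterate_fixed (lamPlusDel_zero der) k
  simp [mbT, h1, h2, Polynomial.sum]

lemma masterBracket1_eq_sum {F : Type*} [Field F]
    (der : MvPolynomial ℕ F → MvPolynomial ℕ F)
    (H : Polynomial (MvPolynomial ℕ F)) (f g : MvPolynomial ℕ F)
    (hf : ∀ m, 2 ≤ m → MvPolynomial.pderiv m f = 0)
    (hg : ∀ n, 2 ≤ n → MvPolynomial.pderiv n g = 0) :
    masterBracket1 der H f g =
      mbT der H f g 0 0 + mbT der H f g 0 1 + (mbT der H f g 1 0 + mbT der H f g 1 1) := by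
  have hbr : masterBracket1 der H f g = ∑ᶠ m : ℕ, ∑ᶠ n : ℕ, mbT der H f g m n := rfl
  have hinner : ∀ m : ℕ, (∑ᶠ n : ℕ, mbT der H f g m n) =
      ∑ n ∈ ({0, 1} : Finset ℕ), mbT der H f g m n := by
    intro m
    apply finsum_eq_sum_of_support_subset
    intro n hn
    simp only [Finset.coe_insert, Finset.coe_singleton, Set.mem_insert_iff,
      Set.mem_singleton_iff]
    by_contra hc
    push_neg at hc
    exact hn (mbT_eq_zero_right der H f g m n (hg n (by omega)))
  have houter : (∑ᶠ m : ℕ, ∑ n ∈ ({0, 1} : Finset ℕ), mbT der H f g m n) =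
      ∑ m ∈ ({0, 1} : Finset ℕ), ∑ n ∈ ({0, 1} : Finset ℕ), mbT der H f g m n := by
    apply finsum_eq_sum_of_support_subset
    intro m hm
    simp only [Finset.coe_insert, Finset.coe_singleton, Set.mem_insert_iff,
      Set.mem_singleton_iff]
    by_contra hc
    push_neg at hc
    apply hm
    have : ∀ n, mbT der H f g m n = 0 :=
      fun n => mbT_eq_zero_left der H f g m n (hf m (by omega))
    simp [this]
  rw [hbr]
  simp only [hinner]
  rw [houter]
  simp [Finset.sum_insert, Finset.sum_singleton]

theorem miura_map_preserves_bracket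
    (F : Type*) [Field F] [CharZero F] :
    let V := MvPolynomial ℕ F
    let der : V → V :=
      ⇑(MvPolynomial.mkDerivation F (fun n : ℕ => (MvPolynomial.X (n + 1) : V)))
    -- `{v_λ v} = −½λ`
    let H : Polynomial V := Polynomial.C (algebraMap F V (-(1/2 : F))) * Polynomial.X
    let br := masterBracket1 der H
    let w : V := MvPolynomial.X 1 - (MvPolynomial.X 0) ^ 2  -- `u = v′ − v²`
    br w w =
      2 * Polynomial.X * Polynomial.C w + Polynomial.C (der w) +
        Polynomial.C (algebraMap F V (1/2 : F)) * Polynomial.X ^ 3 := by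
  intro V der H br w
  classical
  have h0 : der 0 = 0 := map_zero _
  have hadd : ∀ a b : V, der (a + b) = der a + der b := fun a b =>
    map_add (MvPolynomial.mkDerivation F fun n : ℕ => (MvPolynomial.X (n + 1) : V)) a b
  have hneg : ∀ a : V, der (-a) = -(der a) := fun a =>
    map_neg (MvPolynomial.mkDerivation F fun n : ℕ => (MvPolynomial.X (n + 1) : V)) a
  have hmul : ∀ a b : V, der (a * b) = a * der b + b * der a := fun a b => by
    have h := (MvPolynomial.mkDerivation F fun n : ℕ => (MvPolynomial.X (n + 1) : V)).leibniz a b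
    rw [smul_eq_mul, smul_eq_mul] at h
    exact h
  set c : V := algebraMap F V (-(1/2 : F)) with hc
  -- pderiv facts
  have hp0 : MvPolynomial.pderiv 0 w = -(2 * MvPolynomial.X 0) := by
    simp [w, MvPolynomial.pderiv_X_self, MvPolynomial.pderiv_X_of_ne]
  have hp1 : MvPolynomial.pderiv 1 w = 1 := by
    simp [w, MvPolynomial.pderiv_X_self, MvPolynomial.pderiv_X_of_ne]
  have hpw : ∀ n : ℕ, 2 ≤ n → MvPolynomial.pderiv n w = 0 := by
    intro n hn
    simp [w, MvPolynomial.pderiv_X_of_ne (show (1:ℕ) ≠ n by omega),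
      MvPolynomial.pderiv_X_of_ne (show (0:ℕ) ≠ n by omega)]
  -- der facts
  have hd0 : der (MvPolynomial.X 0) = MvPolynomial.X 1 := MvPolynomial.mkDerivation_X _ _ _
  have hd1 : der (MvPolynomial.X 1) = MvPolynomial.X 2 := MvPolynomial.mkDerivation_X _ _ _
  have hdm0 : der (-(2 * MvPolynomial.X 0)) = -(2 * MvPolynomial.X 1) := by
    rw [show (2 * MvPolynomial.X 0 : V) = MvPolynomial.X 0 + MvPolynomial.X 0 by ring,
      hneg, hadd, hd0]
    ring
  have hd1' : der 1 = 0 := Derivation.map_one_eq_zero _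
  have hdc : der c = 0 := Derivation.map_algebraMap _ _
  have hdnegc : der (-c) = 0 := by rw [hneg, hdc, neg_zero]
  have hdw : der w = MvPolynomial.X 2 - 2 * MvPolynomial.X 0 * MvPolynomial.X 1 := by
    have : der ((MvPolynomial.X 0 : V) ^ 2) = 2 * MvPolynomial.X 0 * MvPolynomial.X 1 := by
      rw [pow_two, hmul, hd0]
      ring
    rw [show der w = der (MvPolynomial.X 1) - der ((MvPolynomial.X 0 : V)^2) from map_sub _ _ _,
      hd1, this]
  -- scalar fact
  have k1 : c * (-(2 * MvPolynomial.X 0)) = MvPolynomial.X 0 := by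
    have h2 : (2 : V) = MvPolynomial.C (2 : F) := (map_ofNat _ 2).symm
    calc c * (-(2 * MvPolynomial.X 0))
        = -(MvPolynomial.C (-(1/2 : F)) * MvPolynomial.C (2:F)) * MvPolynomial.X 0 := by
          rw [hc, MvPolynomial.algebraMap_eq, h2]; ring
      _ = MvPolynomial.X 0 := by rw [← map_mul]; norm_num
  have k2 : c * (-(2 * MvPolynomial.X 1)) = MvPolynomial.X 1 := by
    have h2 : (2 : V) = MvPolynomial.C (2 : F) := (map_ofNat _ 2).symm
    calc c * (-(2 * MvPolynomial.X 1))
        = -(MvPolynomial.C (-(1/2 : F)) * MvPolynomial.C (2:F)) * MvPolynomial.X 1 := by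
          rw [hc, MvPolynomial.algebraMap_eq, h2]; ring
      _ = MvPolynomial.X 1 := by rw [← map_mul]; norm_num
  -- the H.sum collapses
  have hH : H = Polynomial.monomial 1 c := by
    rw [show H = Polynomial.C c * Polynomial.X from rfl, ← pow_one (Polynomial.X : Polynomial V),
      Polynomial.C_mul_X_pow_eq_monomial]
  have hsum : ∀ p : Polynomial V,
      (H.sum fun k a => Polynomial.C a * (lamPlusDel der)^[k] p)
        = Polynomial.C c * lamPlusDel der p := by
    intro p
    rw [hH, Polynomial.sum_monomial_index _ _ (by simp), Function.iterate_one]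
  show masterBracket1 der H w w = _
  rw [masterBracket1_eq_sum der H w w hpw hpw]
  -- inner terms
  have hS0 : (H.sum fun k a => Polynomial.C a * (lamPlusDel der)^[k]
      ((negLamDel der)^[0] (Polynomial.C (MvPolynomial.pderiv 0 w))))
      = Polynomial.C (MvPolynomial.X 0) * Polynomial.X + Polynomial.C (MvPolynomial.X 1) := by
    rw [hsum, Function.iterate_zero_apply, hp0, lamPlusDel, derPoly_C_s17 der h0, hdm0]
    rw [mul_add, show (Polynomial.C c) * (Polynomial.X * Polynomial.C (-(2 * MvPolynomial.X 0)))
        = Polynomial.C (c * (-(2 * MvPolynomial.X 0))) * Polynomial.X by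
          rw [Polynomial.C_mul]; ring,
      ← Polynomial.C_mul, k1, k2]
  have hS1 : (H.sum fun k a => Polynomial.C a * (lamPlusDel der)^[k]
      ((negLamDel der)^[1] (Polynomial.C (MvPolynomial.pderiv 1 w))))
      = Polynomial.C (-c) * Polynomial.X ^ 2 := by
    rw [hsum, Function.iterate_one, hp1, Polynomial.C_1, negLamDel]
    rw [show derPoly der (1 : Polynomial V) = 0 by
      rw [show (1 : Polynomial V) = Polynomial.C 1 from Polynomial.C_1.symm,
        derPoly_C_s17 der h0, hd1', Polynomial.C_0]]
    rw [mul_one, sub_zero, lamPlusDel]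
    rw [show (-(Polynomial.X : Polynomial V)) = Polynomial.C (-1) * Polynomial.X ^ 1 by
      rw [pow_one, Polynomial.C_neg, Polynomial.C_1]; ring]
    rw [derPoly_monomial_s17 der h0, show der (-1 : V) = 0 by rw [hneg, hd1', neg_zero]]
    rw [Polynomial.C_0, zero_mul, add_zero, Polynomial.C_neg, Polynomial.C_neg, Polynomial.C_1]
    ring
  rw [mbT, mbT, mbT, mbT, hS0, hS1, hp0, hp1]
  -- evaluate the iterates of lamPlusDel
  have hL0 : (lamPlusDel der)^[1]
      (Polynomial.C (MvPolynomial.X 0) * Polynomial.X + Polynomial.C (MvPolynomial.X 1))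
      = Polynomial.X * (Polynomial.C (MvPolynomial.X 0) * Polynomial.X
          + Polynomial.C (MvPolynomial.X 1))
        + (Polynomial.C (MvPolynomial.X 1) * Polynomial.X + Polynomial.C (MvPolynomial.X 2)) := by
    rw [Function.iterate_one, lamPlusDel, derPoly_add der h0 hadd]
    rw [show Polynomial.C (MvPolynomial.X 0 : V) * Polynomial.X
        = Polynomial.C (MvPolynomial.X 0 : V) * Polynomial.X ^ 1 by rw [pow_one]]
    rw [derPoly_monomial_s17 der h0, derPoly_C_s17 der h0, hd0, hd1, pow_one]
  have hL1 : (lamPlusDel der)^[1] (Polynomial.C (-c) * Polynomial.X ^ 2)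
      = Polynomial.C (-c) * Polynomial.X ^ 3 := by
    rw [Function.iterate_one, lamPlusDel, derPoly_monomial_s17 der h0, hdnegc,
      Polynomial.C_0, zero_mul, add_zero]
    ring
  rw [hL0, hL1, Function.iterate_zero_apply, Function.iterate_zero_apply, hdw]
  have hCc : Polynomial.C (-c) = Polynomial.C (algebraMap F V (1/2 : F)) := by
    rw [hc, ← map_neg (algebraMap F V), neg_neg]
  rw [hCc]
  set x0 := (MvPolynomial.X 0 : V)
  set x1 := (MvPolynomial.X 1 : V)
  set x2 := (MvPolynomial.X 2 : V)
  have k3 : (-(2 * x0)) * (algebraMap F V) (1/2 : F) = -x0 := by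
    have : (-c) * (-(2 * x0)) = -x0 := by rw [neg_mul, k1]
    rw [hc, ← map_neg (algebraMap F V), neg_neg] at this
    rw [mul_comm]
    exact this
  rw [Polynomial.C_1, one_mul, one_mul,
    show (Polynomial.C (-(2 * x0)) : Polynomial V) *
        (Polynomial.C ((algebraMap F V) (1/2 : F)) * Polynomial.X ^ 2)
      = Polynomial.C (-x0) * Polynomial.X ^ 2 by rw [← mul_assoc, ← Polynomial.C_mul, k3],
    show w = x1 - x0 ^ 2 from rfl]
  simp only [map_neg, map_mul, map_sub, map_pow, map_ofNat]
  ring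
end
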